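/- Every K-bilipschitz map F of (ℝ^n, D) is lower-triangular: it has the form F(x_1, …, x_r) = (f_1(x_1,…,x_r), f_2(x_2,…,x_r), …, f_r(x_r)); i.e., the i-th component of F(x) depends only on x_i, x_{i+1}, …, x_r. -/

import Mathlib

/-!
Fix `i` and two points `x, x'` that agree in every coordinate `j` with `α j ≥ α i`, and choose
`β < α i` dominating the exponents of the remaining coordinates. Along the segment
`t ↦ x + t • (x' - x)` the distance `D` grows at most like `|s - t| ^ (1 / β)`, so the `i`-th
component of `F` along the segment is Hölder continuous of exponent `α i / β > 1`. Such a map is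
constant: splitting `[0, 1]` into `N` pieces bounds its total variation by `C * N ^ (1 - α i / β)`.
-/

open Set Filter Topology Finset

theorem eq_of_norm_sub_le_mul_abs_rpow {E : Type*} [NormedAddCommGroup E] {g : ℝ → E}
    {C γ : ℝ} (hγ : 1 < γ)
    (hg : ∀ s ∈ Icc (0 : ℝ) 1, ∀ t ∈ Icc (0 : ℝ) 1, ‖g s - g t‖ ≤ C * |s - t| ^ γ) :
    g 0 = g 1 := by
  have bound : ∀ N : ℕ, 1 ≤ N → ‖g 1 - g 0‖ ≤ C * (N : ℝ) ^ (1 - γ) := by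
    intro N hN
    have hN0 : (0 : ℝ) < N := by exact_mod_cast hN
    have hmem : ∀ k ≤ N, (k / N : ℝ) ∈ Icc (0 : ℝ) 1 := fun k hk =>
      ⟨by positivity, div_le_one_of_le₀ (by exact_mod_cast hk) hN0.le⟩
    have hstep : ∀ k ∈ range N, ‖g ((k + 1 : ℕ) / N) - g (k / N)‖ ≤ C * (N : ℝ)⁻¹ ^ γ := by
      intro k hk
      have hkN := mem_range.mp hk
      refine (hg _ (hmem _ hkN) _ (hmem _ hkN.le)).trans_eq ?_
      rw [Nat.cast_succ, ← sub_div, add_sub_cancel_left, one_div, abs_of_pos (by positivity)]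
    calc ‖g 1 - g 0‖ = ‖∑ k ∈ range N, (g ((k + 1 : ℕ) / N) - g (k / N))‖ := by
          rw [sum_range_sub (fun k : ℕ => g (k / N)), div_self hN0.ne', Nat.cast_zero,
            zero_div]
      _ ≤ ∑ _k ∈ range N, C * (N : ℝ)⁻¹ ^ γ := (norm_sum_le _ _).trans (sum_le_sum hstep)
      _ = C * (N : ℝ) ^ (1 - γ) := by
          rw [sum_const, card_range, nsmul_eq_mul, Real.inv_rpow hN0.le,
            Real.rpow_sub hN0, Real.rpow_one]
          ring
  have hlim : Tendsto (fun N : ℕ => C * (N : ℝ) ^ (1 - γ)) atTop (𝓝 0) := by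
    have := (tendsto_rpow_neg_atTop (sub_pos.mpr hγ)).comp tendsto_natCast_atTop_atTop
    simpa [neg_sub] using this.const_mul C
  have := ge_of_tendsto hlim (eventually_atTop.2 ⟨1, bound⟩)
  exact (sub_eq_zero.mp (norm_le_zero_iff.mp this)).symm

theorem exists_pos_lt_forall_le_of_lt {ι : Type*} [Finite ι] (α : ι → ℝ) {a : ℝ} (ha : 0 < a) :
    ∃ β, 0 < β ∧ β < a ∧ ∀ j, α j < a → α j ≤ β := by
  have := Fintype.ofFinite ι
  set T := insert (a / 2) ((univ.filter (α · < a)).image α)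
  have hT : T.Nonempty := insert_nonempty _ _
  refine ⟨T.max' hT, (half_pos ha).trans_le (T.le_max' _ (mem_insert_self _ _)), ?_,
    fun j hj => T.le_max' _ (mem_insert_of_mem (mem_image_of_mem _ (by simpa using hj)))⟩
  rcases mem_insert.mp (T.max'_mem hT) with h | h
  · rw [h]; exact half_lt_self ha
  · obtain ⟨j, hj, hjβ⟩ := mem_image.mp h
    rw [← hjβ]; simpa using hj

section AnisoDist

variable {ι : Type*} {E : ι → Type*} [∀ i, SeminormedAddCommGroup (E i)]

noncomputable def anisoDist (α : ι → ℝ) (x y : ∀ i, E i) : ℝ :=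
  ⨆ i, ‖x i - y i‖ ^ (1 / α i)

variable {α : ι → ℝ}

theorem anisoDist_nonneg (x y : ∀ i, E i) : 0 ≤ anisoDist α x y :=
  Real.iSup_nonneg fun _ => by positivity

variable [Finite ι]

theorem norm_sub_rpow_le_anisoDist (x y : ∀ i, E i) (i : ι) :
    ‖x i - y i‖ ^ (1 / α i) ≤ anisoDist α x y :=
  le_ciSup (f := fun i => ‖x i - y i‖ ^ (1 / α i)) (finite_range _).bddAbove i

theorem norm_sub_le_anisoDist_rpow {i : ι} (hα : 0 < α i) (x y : ∀ i, E i) :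
    ‖x i - y i‖ ≤ anisoDist α x y ^ α i := by
  have h := Real.rpow_le_rpow (by positivity) (norm_sub_rpow_le_anisoDist (α := α) x y i) hα.le
  rwa [← Real.rpow_mul (norm_nonneg _), one_div_mul_cancel hα.ne', Real.rpow_one] at h

variable [∀ i, NormedSpace ℝ (E i)]

theorem anisoDist_segment_le (hα : ∀ j, 0 < α j) {β : ℝ} (hβ : 0 < β) {x x' : ∀ i, E i}
    (hxx' : ∀ j, x j ≠ x' j → α j ≤ β) {s t : ℝ} (hst : |s - t| ≤ 1) :
    anisoDist α (x + s • (x' - x)) (x + t • (x' - x)) ≤ |s - t| ^ (1 / β) * anisoDist α x x' := by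
  refine Real.iSup_le (fun j => ?_) (by positivity [anisoDist_nonneg (α := α) x x'])
  have hdiff : ‖(x + s • (x' - x)) j - (x + t • (x' - x)) j‖ = |s - t| * ‖x j - x' j‖ := by
    simp only [Pi.add_apply, Pi.smul_apply, Pi.sub_apply, add_sub_add_left_eq_sub, ← sub_smul,
      norm_smul, Real.norm_eq_abs, norm_sub_rev (x' j)]
  rw [hdiff, Real.mul_rpow (abs_nonneg _) (norm_nonneg _)]
  by_cases hj : x j = x' j
  · rw [hj, sub_self, norm_zero, Real.zero_rpow (one_div_ne_zero (hα j).ne'), mul_zero]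
    exact mul_nonneg (by positivity) (anisoDist_nonneg x x')
  refine mul_le_mul ?_ (norm_sub_rpow_le_anisoDist x x' j) (by positivity) (by positivity)
  exact Real.rpow_le_rpow_of_exponent_ge' (abs_nonneg _) hst (by positivity [hα j])
    (one_div_le_one_div_of_le (hα j) (hxx' j hj))

end AnisoDist

theorem apply_eq_apply_of_anisoDist_le_mul {ι : Type*} [Finite ι] {E E' : ι → Type*}
    [∀ i, SeminormedAddCommGroup (E i)] [∀ i, NormedSpace ℝ (E i)]
    [∀ i, NormedAddCommGroup (E' i)] {α : ι → ℝ} (hα : ∀ j, 0 < α j) {K : ℝ} (hK : 0 ≤ K)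
    {f : (∀ i, E i) → ∀ i, E' i} (hf : ∀ p q, anisoDist α (f p) (f q) ≤ K * anisoDist α p q)
    {i : ι} {x x' : ∀ i, E i} (hxx' : ∀ j, x j ≠ x' j → α j < α i) : f x i = f x' i := by
  obtain ⟨β, hβ, hβi, hβle⟩ := exists_pos_lt_forall_le_of_lt α (hα i)
  have holder : ∀ s ∈ Icc (0 : ℝ) 1, ∀ t ∈ Icc (0 : ℝ) 1,
      ‖f (x + s • (x' - x)) i - f (x + t • (x' - x)) i‖ ≤
        (K * anisoDist α x x') ^ α i * |s - t| ^ (α i / β) := by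
    intro s hs t ht
    have hst : |s - t| ≤ 1 :=
      abs_sub_le_iff.mpr ⟨by linarith [hs.2, ht.1], by linarith [hs.1, ht.2]⟩
    calc _ ≤ anisoDist α (f (x + s • (x' - x))) (f (x + t • (x' - x))) ^ α i :=
          norm_sub_le_anisoDist_rpow (hα i) _ _
      _ ≤ (K * (|s - t| ^ (1 / β) * anisoDist α x x')) ^ α i := by
          refine Real.rpow_le_rpow (anisoDist_nonneg _ _) ((hf _ _).trans ?_) (hα i).le
          exact mul_le_mul_of_nonneg_left
            (anisoDist_segment_le hα hβ (fun j hj => hβle j (hxx' j hj)) hst) hK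
      _ = (K * anisoDist α x x') ^ α i * |s - t| ^ (α i / β) := by
          have hd := anisoDist_nonneg (α := α) x x'
          rw [mul_left_comm, Real.mul_rpow (by positivity) (by positivity),
            ← Real.rpow_mul (abs_nonneg _), one_div_mul_eq_div, mul_comm]
  simpa using eq_of_norm_sub_le_mul_abs_rpow ((one_lt_div hβ).mpr hβi) holder

theorem stmt_5_general (r : ℕ) (n : Fin (r + 1) → ℕ) (α : Fin (r + 1) → ℝ)
    (hα : ∀ i, 0 < α i) (hmono : StrictMono α)
    (D : (∀ i, EuclideanSpace ℝ (Fin (n i))) → (∀ i, EuclideanSpace ℝ (Fin (n i))) → ℝ)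
    (hD : ∀ x y, D x y = ⨆ i, ‖x i - y i‖ ^ (1 / α i))
    (F : (∀ i, EuclideanSpace ℝ (Fin (n i))) → ∀ i, EuclideanSpace ℝ (Fin (n i)))
    (K : ℝ) (hK : 1 ≤ K)
    (hbilip : ∀ p q, D p q / K ≤ D (F p) (F q) ∧ D (F p) (F q) ≤ K * D p q) :
    ∀ (i : Fin (r + 1)) (x x' : ∀ i, EuclideanSpace ℝ (Fin (n i))),
      (∀ j, i ≤ j → x j = x' j) → F x i = F x' i := by
  intro i x x' hxx'
  have hD' : D = anisoDist α := funext₂ hD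
  subst hD'
  refine apply_eq_apply_of_anisoDist_le_mul hα (by linarith) (fun p q => (hbilip p q).2) ?_
  intro j hj
  exact hmono (not_le.mp fun hij => hj (hxx' j hij))

/-- Every `K`-bilipschitz bijection of `(ℝ^n, D)` is lower-triangular: its `i`-th component
depends only on the coordinates `x_i, x_{i+1}, …, x_r`. -/
theorem stmt_5 (r : ℕ) (n : Fin (r + 1) → ℕ) (α : Fin (r + 1) → ℝ)
    (hα : ∀ i, 0 < α i) (hmono : StrictMono α)
    (D : (∀ i, EuclideanSpace ℝ (Fin (n i))) → (∀ i, EuclideanSpace ℝ (Fin (n i))) → ℝ)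
    (hD : ∀ x y, D x y = ⨆ i, ‖x i - y i‖ ^ (1 / α i))
    (F : (∀ i, EuclideanSpace ℝ (Fin (n i))) → ∀ i, EuclideanSpace ℝ (Fin (n i)))
    (hFbij : Function.Bijective F) (K : ℝ) (hK : 1 ≤ K)
    (hbilip : ∀ p q, D p q / K ≤ D (F p) (F q) ∧ D (F p) (F q) ≤ K * D p q) :
    ∀ (i : Fin (r + 1)) (x x' : ∀ i, EuclideanSpace ℝ (Fin (n i))),
      (∀ j, i ≤ j → x j = x' j) → F x i = F x' i :=
  stmt_5_general r n α hα hmono D hD F K hK hbilip
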